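/- In the logic LDiiP, modal idempotency holds: ⊢ (M ⊩_a (M ⊩_a φ)) ↔ (M ⊩_a φ). -/

import Mathlib

/-- Formulas of LDiiP over agents and messages. -/
inductive Fm (Agent Msg : Type) : Type where
  | atom : Nat → Fm Agent Msg
  | knows : Agent → Msg → Fm Agent Msg
  | bot : Fm Agent Msg
  | imp : Fm Agent Msg → Fm Agent Msg → Fm Agent Msg
  | and : Fm Agent Msg → Fm Agent Msg → Fm Agent Msg
  | or : Fm Agent Msg → Fm Agent Msg → Fm Agent Msg
  | neg : Fm Agent Msg → Fm Agent Msg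
  | proves : Msg → Agent → Fm Agent Msg → Fm Agent Msg

def Fm.iff {Agent Msg : Type} (p q : Fm Agent Msg) : Fm Agent Msg :=
  (p.imp q).and (q.imp p)

/-- Classical evaluation of a formula, treating atoms, knowledge atoms and
modal formulas as opaque propositions assigned by `v`. -/
def Fm.eval {Agent Msg : Type} (v : Fm Agent Msg → Prop) : Fm Agent Msg → Prop
  | .bot => False
  | .imp p q => Fm.eval v p → Fm.eval v q
  | .and p q => Fm.eval v p ∧ Fm.eval v q
  | .or p q => Fm.eval v p ∨ Fm.eval v q
  | .neg p => ¬ Fm.eval v p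
  | φ => v φ

/-- A classical (propositional) tautology schema. -/
def Fm.Taut {Agent Msg : Type} (φ : Fm Agent Msg) : Prop :=
  ∀ v, φ.eval v

/-- The logic LDiiP: a normal modal logic with proof modality `proves M a φ`
(`M ⊩_a φ`), containing all classical tautologies, with axioms of
self-knowledge, Kripke's law, epistemic truthfulness, proof consistency and
negation completeness, closed under modus ponens and necessitation. -/
structure LDiiP (Agent Msg : Type) where
  Thm : Fm Agent Msg → Prop
  taut : ∀ {φ : Fm Agent Msg}, φ.Taut → Thm φ
  mp : ∀ {φ ψ : Fm Agent Msg}, Thm (φ.imp ψ) → Thm φ → Thm ψ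
  nec : ∀ (M : Msg) (a : Agent) {φ : Fm Agent Msg}, Thm φ → Thm (.proves M a φ)
  selfKnow : ∀ (M : Msg) (a : Agent), Thm (.proves M a (.knows a M))
  kripke : ∀ (M : Msg) (a : Agent) (φ ψ : Fm Agent Msg),
    Thm ((Fm.proves M a (φ.imp ψ)).imp ((Fm.proves M a φ).imp (Fm.proves M a ψ)))
  epistemic : ∀ (M : Msg) (a : Agent) (φ : Fm Agent Msg),
    Thm ((Fm.proves M a φ).imp ((Fm.knows a M).imp φ))
  consistency : ∀ (M : Msg) (a : Agent), Thm (Fm.neg (Fm.proves M a Fm.bot))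
  negComplete : ∀ (M : Msg) (a : Agent) (φ : Fm Agent Msg),
    Thm ((Fm.proves M a φ).or (Fm.proves M a (Fm.neg φ)))

/-! Necessitating epistemic truthfulness `M ⊩_a φ → (K_a M → φ)` and discharging `K_a M` by
self-knowledge gives `M ⊩_a (M ⊩_a φ) → M ⊩_a φ`. For the converse, negation completeness lets
`M ⊩_a ¬(M ⊩_a φ)` be pushed inside to `M ⊩_a (M ⊩_a ¬φ)`, hence to `M ⊩_a ¬φ`, which together
with `M ⊩_a φ` contradicts proof consistency; negation completeness for `M ⊩_a φ` then leaves
`M ⊩_a (M ⊩_a φ)`. -/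

namespace LDiiP

variable {Agent Msg : Type} (L : LDiiP Agent Msg)

theorem mp_of_taut {p q : Fm Agent Msg} (h : (p.imp q).Taut) (hp : L.Thm p) : L.Thm q :=
  L.mp (L.taut h) hp

theorem mp_of_taut₂ {p q r : Fm Agent Msg} (h : (p.imp (q.imp r)).Taut)
    (hp : L.Thm p) (hq : L.Thm q) : L.Thm r :=
  L.mp (L.mp (L.taut h) hp) hq

theorem mp_of_taut₃ {p q r s : Fm Agent Msg} (h : (p.imp (q.imp (r.imp s))).Taut)
    (hp : L.Thm p) (hq : L.Thm q) (hr : L.Thm r) : L.Thm s :=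
  L.mp (L.mp_of_taut₂ h hp hq) hr

theorem imp_trans {p q r : Fm Agent Msg} (hpq : L.Thm (p.imp q)) (hqr : L.Thm (q.imp r)) :
    L.Thm (p.imp r) :=
  L.mp_of_taut₂ (by intro v; simp only [Fm.eval]; tauto) hpq hqr

variable {L} (M : Msg) (a : Agent)

theorem proves_mono {p q : Fm Agent Msg} (h : L.Thm (p.imp q)) :
    L.Thm ((Fm.proves M a p).imp (Fm.proves M a q)) :=
  L.mp (L.kripke M a p q) (L.nec M a h)

theorem proves_mono₂ {p q r : Fm Agent Msg} (h : L.Thm (p.imp (q.imp r))) :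
    L.Thm ((Fm.proves M a p).imp ((Fm.proves M a q).imp (Fm.proves M a r))) :=
  L.imp_trans (proves_mono M a h) (L.kripke M a q r)

theorem proves_of_proves_knows_imp (ψ : Fm Agent Msg) :
    L.Thm ((Fm.proves M a ((Fm.knows a M).imp ψ)).imp (Fm.proves M a ψ)) :=
  L.mp_of_taut₂ (by intro v; simp only [Fm.eval]; tauto)
    (L.kripke M a (Fm.knows a M) ψ) (L.selfKnow M a)

theorem proves_proves_imp_proves (ψ : Fm Agent Msg) :
    L.Thm ((Fm.proves M a (Fm.proves M a ψ)).imp (Fm.proves M a ψ)) :=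
  L.imp_trans (proves_mono M a (L.epistemic M a ψ)) (proves_of_proves_knows_imp M a ψ)

theorem proves_imp_not_proves_neg (ψ : Fm Agent Msg) :
    L.Thm ((Fm.proves M a ψ).imp (Fm.proves M a ψ.neg).neg) := by
  have hbot : L.Thm ((Fm.proves M a ψ).imp ((Fm.proves M a ψ.neg).imp (Fm.proves M a .bot))) :=
    proves_mono₂ M a (L.taut (by intro v; simp only [Fm.eval]; tauto))
  exact L.mp_of_taut₂ (by intro v; simp only [Fm.eval]; tauto) hbot (L.consistency M a)

theorem not_proves_imp_proves_neg (ψ : Fm Agent Msg) :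
    L.Thm ((Fm.proves M a ψ).neg.imp (Fm.proves M a ψ.neg)) :=
  L.mp_of_taut (by intro v; simp only [Fm.eval]; tauto) (L.negComplete M a ψ)

theorem proves_not_proves_imp_proves_neg (ψ : Fm Agent Msg) :
    L.Thm ((Fm.proves M a (Fm.proves M a ψ).neg).imp (Fm.proves M a ψ.neg)) :=
  L.imp_trans (proves_mono M a (not_proves_imp_proves_neg M a ψ))
    (proves_proves_imp_proves M a ψ.neg)

theorem proves_imp_proves_proves (ψ : Fm Agent Msg) :
    L.Thm ((Fm.proves M a ψ).imp (Fm.proves M a (Fm.proves M a ψ))) :=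
  L.mp_of_taut₃ (by intro v; simp only [Fm.eval]; tauto) (L.negComplete M a (Fm.proves M a ψ))
    (proves_not_proves_imp_proves_neg M a ψ) (proves_imp_not_proves_neg M a ψ)

end LDiiP

/-- Modal idempotency: ⊢ (M ⊩_a (M ⊩_a φ)) ↔ (M ⊩_a φ). -/
theorem ldiip_modal_idempotency {Agent Msg : Type} (L : LDiiP Agent Msg)
    (M : Msg) (a : Agent) (φ : Fm Agent Msg) :
    L.Thm (Fm.iff (Fm.proves M a (Fm.proves M a φ)) (Fm.proves M a φ)) :=
  L.mp_of_taut₂ (by intro v; simp only [Fm.iff, Fm.eval]; tauto)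
    (LDiiP.proves_proves_imp_proves M a φ) (LDiiP.proves_imp_proves_proves M a φ)
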